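/- Suppose both the primal SDP and the dual SDP are strictly feasible and A₁, …, A_m are linearly independent. Then for data (A₀(t), …, A_m(t), b(t)) continuous at t = 0 with values (A₀, …, A_m, b) at t = 0, the perturbed primal and dual are feasible for sufficiently small t and the optimal value of the perturbed dual SDP varies continuously at t = 0. -/

import Mathlib

/-!
Let `v(t)` be the optimal value of the perturbed dual. A strictly feasible primal point `y` gives a
uniform margin `A₀(t) - ∑ yₖ Aₖ(t) ⪰ μ I` for small `t`; by weak duality this bounds `v(t)` from
below and bounds the trace of every dual feasible point of bounded objective value.

Upper semicontinuity: a near-optimal dual point at `0` can be moved to a positive definite one, and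
a correction in `span {Aₖ(0)}`, whose coefficients solve a Gram system that is invertible by linear
independence and tend to `0`, puts it back on the perturbed constraints while keeping it
positive semidefinite.

Lower semicontinuity: by the trace bound, near-optimal dual points for small `t` lie in a compact
set, so they accumulate at a point that is feasible at `0` with value at most `liminf v(t)`.
-/

open Matrix Set Filter Topology

noncomputable section

abbrev Mat (n : ℕ) := Matrix (Fin n) (Fin n) ℝ

def ip {n : ℕ} (A B : Mat n) : ℝ := ∑ i, ∑ j, A i j * B i j

def dualVals {n m : ℕ} (A₀ : Mat n) (A : Fin m → Mat n) (b : Fin m → ℝ) : Set ℝ :=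
  {v | ∃ X : Mat n, (X.PosSemidef ∧ ∀ k, ip (A k) X = b k) ∧ v = ip A₀ X}

namespace Matrix

variable {ι : Type*}

lemma IsSymm.isHermitian_of_trivialStar {α : Type*} [Star α] [TrivialStar α] {A : Matrix ι ι α}
    (hA : A.IsSymm) : A.IsHermitian :=
  (conjTranspose_eq_transpose_of_trivial A).trans hA

lemma PosSemidef.of_sub_smul_one [DecidableEq ι] {A : Matrix ι ι ℝ} {μ : ℝ}
    (h : (A - μ • 1).PosSemidef) (hμ : 0 ≤ μ) : A.PosSemidef := by
  simpa using h.add (PosSemidef.one.smul hμ)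

lemma isCompact_setOf_abs_apply_le {κ : Type*} (R : ℝ) :
    IsCompact {A : Matrix ι κ ℝ | ∀ i j, |A i j| ≤ R} := by
  have h : {A : Matrix ι κ ℝ | ∀ i j, |A i j| ≤ R} =
      univ.pi fun _ => univ.pi fun _ => Icc (-R) R := by
    ext A
    simp only [mem_ofPred_eq, abs_le]
    exact ⟨fun h i _ j _ => h i j, fun h i j => h i trivial j trivial⟩
  rw [h]
  exact isCompact_univ_pi fun _ => isCompact_univ_pi fun _ => isCompact_Icc

variable [Fintype ι]

lemma PosSemidef.two_mul_abs_apply_le {A : Matrix ι ι ℝ} (hA : A.PosSemidef) (i j : ι) :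
    2 * |A i j| ≤ A i i + A j j := by
  classical
  have key (s : ℝ) (hs : s * s = 1) : 0 ≤ A i i + A j j + 2 * s * A i j := by
    have h := hA.dotProduct_mulVec_nonneg (Pi.single i 1 + Pi.single j s)
    have hji : A j i = A i j := by simpa using hA.isHermitian.apply i j
    simp only [star_trivial, mulVec_add, mulVec_single, MulOpposite.op_one, one_smul,
      op_smul_eq_smul, dotProduct_add, add_dotProduct, single_dotProduct, col_apply, one_mul, hji,
      dotProduct_smul, smul_eq_mul] at h
    linear_combination h + A j j * hs
  rcases abs_cases (A i j) with ⟨h, -⟩ | ⟨h, -⟩ <;> rw [h]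
  · linarith [key (-1) (by norm_num)]
  · linarith [key 1 (by norm_num)]

lemma PosSemidef.abs_apply_le_trace {A : Matrix ι ι ℝ} (hA : A.PosSemidef) (i j : ι) :
    |A i j| ≤ A.trace := by
  have hdiag (k : ι) : A k k ≤ A.trace :=
    Finset.single_le_sum (f := fun k => A k k) (fun _ _ => hA.diag_nonneg) (Finset.mem_univ k)
  linarith [hA.two_mul_abs_apply_le i j, hdiag i, hdiag j]

lemma isClosed_setOf_posSemidef : IsClosed {A : Matrix ι ι ℝ | A.PosSemidef} := by
  have h : {A : Matrix ι ι ℝ | A.PosSemidef} =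
      {A | Aᴴ = A} ∩ ⋂ x : ι → ℝ, {A | 0 ≤ x ⬝ᵥ A *ᵥ x} := by
    ext A; simp [posSemidef_iff_dotProduct_mulVec, IsHermitian]
  rw [h]
  exact (isClosed_eq continuous_id.matrix_conjTranspose continuous_id).inter
    (isClosed_iInter fun x => isClosed_le continuous_const
      (continuous_const.dotProduct (continuous_id.matrix_mulVec continuous_const)))

lemma PosDef.exists_posSemidef_sub_smul_one [DecidableEq ι] {A : Matrix ι ι ℝ} (hA : A.PosDef) :
    ∃ μ : ℝ, 0 < μ ∧ (A - μ • 1).PosSemidef := by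
  rcases isEmpty_or_nonempty ι with hι | hι
  · exact ⟨1, one_pos, by rw [Subsingleton.elim (A - (1 : ℝ) • 1) 0]; exact .zero⟩
  set μ := Finset.univ.inf' Finset.univ_nonempty hA.isHermitian.eigenvalues
  refine ⟨μ, (Finset.lt_inf'_iff _).2 fun i _ => hA.eigenvalues_pos i, ?_⟩
  set U : Matrix ι ι ℝ := (hA.isHermitian.eigenvectorUnitary : Matrix ι ι ℝ)
  have hA' : A = U * diagonal hA.isHermitian.eigenvalues * star U := by
    simpa using hA.isHermitian.spectral_theorem
  have hUU : U * star U = 1 := by simp [U]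
  have hdiag : A - μ • 1 = U * diagonal (fun i => hA.isHermitian.eigenvalues i - μ) * Uᴴ := by
    rw [← diagonal_sub, mul_sub, sub_mul, ← star_eq_conjTranspose, ← hA', ← smul_one_eq_diagonal,
      mul_smul_comm, smul_mul_assoc, mul_one, hUU]
  rw [hdiag]
  refine (PosSemidef.diagonal (R := ℝ) fun i => ?_).mul_mul_conjTranspose_same _
  exact sub_nonneg.2 (Finset.inf'_le _ (Finset.mem_univ i))

lemma abs_dotProduct_mulVec_le {E : Matrix ι ι ℝ} {ε : ℝ} (hε : ∀ i j, |E i j| ≤ ε) (x : ι → ℝ) :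
    |x ⬝ᵥ E *ᵥ x| ≤ ε * (∑ i, |x i|) ^ 2 := by
  calc |x ⬝ᵥ E *ᵥ x| ≤ ∑ i, |x i| * ∑ j, ε * |x j| := by
        refine (Finset.abs_sum_le_sum_abs _ _).trans (Finset.sum_le_sum fun i _ => ?_)
        rw [abs_mul]
        refine mul_le_mul_of_nonneg_left ((Finset.abs_sum_le_sum_abs _ _).trans
          (Finset.sum_le_sum fun j _ => ?_)) (abs_nonneg _)
        rw [abs_mul]
        exact mul_le_mul_of_nonneg_right (hε i j) (abs_nonneg _)
    _ = ε * (∑ i, |x i|) ^ 2 := by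
        rw [sq, Finset.sum_mul_sum, Finset.mul_sum]
        refine Finset.sum_congr rfl fun i _ => ?_
        rw [Finset.mul_sum, Finset.mul_sum]
        exact Finset.sum_congr rfl fun j _ => by ring

lemma posSemidef_add_smul_one_of_abs_apply_le [DecidableEq ι] {E : Matrix ι ι ℝ}
    (hE : E.IsHermitian) {ε : ℝ} (hε : ∀ i j, |E i j| ≤ ε) :
    (E + (Fintype.card ι * ε) • 1).PosSemidef := by
  rcases isEmpty_or_nonempty ι with hι | ⟨⟨i⟩⟩
  · rw [Subsingleton.elim (E + _) 0]; exact .zero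
  refine .of_dotProduct_mulVec_nonneg (hE.add (isHermitian_one.smul (IsSelfAdjoint.all _)))
    fun x => ?_
  have hcs : (∑ i, |x i|) ^ 2 ≤ Fintype.card ι * (x ⬝ᵥ x) := by
    simpa [dotProduct, ← sq] using
      sq_sum_le_card_mul_sum_sq (s := Finset.univ) (f := fun i => |x i|)
  have hε0 : 0 ≤ ε := (abs_nonneg _).trans (hε i i)
  simp only [star_trivial, add_mulVec, smul_mulVec, one_mulVec, dotProduct_add, dotProduct_smul,
    smul_eq_mul]
  nlinarith [abs_le.1 (abs_dotProduct_mulVec_le hε x), mul_le_mul_of_nonneg_left hcs hε0]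

lemma PosDef.eventually_posSemidef_sub_smul_one [DecidableEq ι] {T : Type*} {l : Filter T}
    {F : T → Matrix ι ι ℝ} {A : Matrix ι ι ℝ} (hA : A.PosDef) (hF : Tendsto F l (𝓝 A))
    (hFh : ∀ t, (F t).IsHermitian) : ∃ μ : ℝ, 0 < μ ∧ ∀ᶠ t in l, (F t - μ • 1).PosSemidef := by
  obtain ⟨μ, hμ, hAμ⟩ := hA.exists_posSemidef_sub_smul_one
  set ε := μ / (2 * (Fintype.card ι + 1))
  have hε : 0 < ε := by positivity
  have hcε : Fintype.card ι * ε < μ := by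
    have hcard : (0 : ℝ) ≤ Fintype.card ι := Nat.cast_nonneg _
    rw [show Fintype.card ι * ε = μ * (Fintype.card ι / (2 * (Fintype.card ι + 1))) by ring]
    exact mul_lt_of_lt_one_right hμ ((div_lt_one (by positivity)).2 (by linarith))
  refine ⟨μ - Fintype.card ι * ε, sub_pos.2 hcε, ?_⟩
  have hclose : ∀ᶠ t in l, ∀ i j, |(F t - A) i j| ≤ ε := by
    simp only [eventually_all]
    intro i j
    have hij := tendsto_pi_nhds.1 (tendsto_pi_nhds.1 hF i) j
    filter_upwards [Metric.tendsto_nhds.1 hij ε hε] with t ht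
    exact (Real.dist_eq _ _ ▸ ht).le
  filter_upwards [hclose] with t ht
  -- `F t - (μ - card ι * ε) • 1 = (A - μ • 1) + ((F t - A) + (card ι * ε) • 1)`
  have := hAμ.add (posSemidef_add_smul_one_of_abs_apply_le ((hFh t).sub hA.isHermitian) ht)
  convert this using 1
  module

lemma PosDef.eventually_posSemidef [DecidableEq ι] {T : Type*} {l : Filter T}
    {F : T → Matrix ι ι ℝ} {A : Matrix ι ι ℝ} (hA : A.PosDef) (hF : Tendsto F l (𝓝 A))
    (hFh : ∀ t, (F t).IsHermitian) : ∀ᶠ t in l, (F t).PosSemidef := by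
  obtain ⟨μ, hμ, hev⟩ := hA.eventually_posSemidef_sub_smul_one hF hFh
  exact hev.mono fun t ht => ht.of_sub_smul_one hμ.le

end Matrix

lemma IsCompact.exists_prodMk_mem_of_frequently {T α Z : Type*} [TopologicalSpace α]
    [TopologicalSpace Z] {l : Filter T} {f : T → α} {a : α} {K : Set Z} {C : Set (α × Z)}
    (hK : IsCompact K) (hC : IsClosed C) (hf : Tendsto f l (𝓝 a))
    (h : ∃ᶠ t in l, ∃ z ∈ K, (f t, z) ∈ C) : ∃ z ∈ K, (a, z) ∈ C := by
  by_contra! hcon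
  have hev : ∀ᶠ x in 𝓝 a, ∀ z ∈ K, (x, z) ∉ C :=
    hK.eventually_forall_of_forall_eventually fun z hz => hC.isOpen_compl.mem_nhds (hcon z hz)
  exact h ((hf.eventually hev).mono fun t ht ⟨z, hz, hzC⟩ => ht z hz hzC)

lemma exists_forall_Icc_of_eventually_nhdsWithin_Icc {α : Type*} [TopologicalSpace α]
    [LinearOrder α] [OrderTopology α] [NoMaxOrder α] [DenselyOrdered α] {a b : α} (hab : a < b)
    {P : α → Prop} (h : ∀ᶠ t in 𝓝[Icc a b] a, P t) : ∃ c, a < c ∧ c ≤ b ∧ ∀ t ∈ Icc a c, P t := by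
  rw [nhdsWithin_Icc_eq_nhdsGE hab] at h
  obtain ⟨u, hau, hu⟩ := mem_nhdsGE_iff_exists_Icc_subset.1 h
  exact ⟨min u b, lt_min hau hab, min_le_right _ _,
    fun t ht => hu (Icc_subset_Icc_right (min_le_left _ _) ht)⟩

section FrobeniusPairing

variable {n : ℕ}

lemma ip_eq_vec_dotProduct (A B : Mat n) : ip A B = vec A ⬝ᵥ vec B := by
  simp only [ip, dotProduct, vec, Fintype.sum_prod_type]
  exact Finset.sum_comm

lemma ip_sub_sum_smul_left {ι : Type*} [Fintype ι] (C : Mat n) (A : ι → Mat n) (c : ι → ℝ)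
    (X : Mat n) : ip (C - ∑ k, c k • A k) X = ip C X - ∑ k, c k * ip (A k) X := by
  simp [ip_eq_vec_dotProduct, vec_sub, vec_sum, vec_smul, sub_dotProduct, sum_dotProduct]

lemma ip_add_sum_smul_right {ι : Type*} [Fintype ι] (C X : Mat n) (A : ι → Mat n) (c : ι → ℝ) :
    ip C (X + ∑ k, c k • A k) = ip C X + ∑ k, c k * ip C (A k) := by
  simp [ip_eq_vec_dotProduct, vec_add, vec_sum, vec_smul, dotProduct_add, dotProduct_sum]

lemma ip_one_sub_smul_add_smul_right (C X Y : Mat n) (θ : ℝ) :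
    ip C ((1 - θ) • X + θ • Y) = (1 - θ) * ip C X + θ * ip C Y := by
  simp [ip_eq_vec_dotProduct, vec_add, vec_smul, dotProduct_add]

-- `ip A B` is the sum of the entries of the Hadamard product `A ⊙ B`, which is positive
-- semidefinite by the Schur product theorem.
lemma ip_nonneg {A B : Mat n} (hA : A.PosSemidef) (hB : B.PosSemidef) : 0 ≤ ip A B := by
  simpa [ip, dotProduct, mulVec] using (hA.hadamard hB).dotProduct_mulVec_nonneg 1

lemma mul_trace_le_ip {S X : Mat n} {μ : ℝ} (hS : (S - μ • 1).PosSemidef) (hX : X.PosSemidef) :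
    μ * X.trace ≤ ip S X := by
  have h := ip_nonneg hS hX
  have hone : ip 1 X = X.trace := by simp [ip, one_apply, trace]
  rw [ip_eq_vec_dotProduct, vec_sub, vec_smul, sub_dotProduct, smul_dotProduct,
    ← ip_eq_vec_dotProduct, ← ip_eq_vec_dotProduct, hone, smul_eq_mul] at h
  linarith

@[fun_prop]
lemma Continuous.ip {X : Type*} [TopologicalSpace X] {F G : X → Mat n} (hF : Continuous F)
    (hG : Continuous G) : Continuous fun x => _root_.ip (F x) (G x) := by
  unfold _root_.ip; fun_prop

lemma Filter.Tendsto.ip {T : Type*} {l : Filter T} {F G : T → Mat n} {A B : Mat n}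
    (hF : Tendsto F l (𝓝 A)) (hG : Tendsto G l (𝓝 B)) :
    Tendsto (fun t => _root_.ip (F t) (G t)) l (𝓝 (_root_.ip A B)) := by
  have hip : Continuous fun p : Mat n × Mat n => _root_.ip p.1 p.2 := by fun_prop
  exact ((hip.tendsto (A, B)).comp (hF.prodMk_nhds hG) :)

lemma posDef_ip_gram_of_linearIndependent {ι : Type*} [Fintype ι] {A : ι → Mat n}
    (hA : LinearIndependent ℝ A) :
    (Matrix.of fun k j => ip (A k) (A j)).PosDef := by
  set Φ : Matrix ι (Fin n × Fin n) ℝ := .of fun k => vec (A k)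
  have hΦ : (Matrix.of fun k j => ip (A k) (A j)) = Φ * Φᴴ := by
    ext k j; simp [Φ, ip_eq_vec_dotProduct, mul_apply, dotProduct]
  have hvec (c : ι → ℝ) : c ᵥ* Φ = vec (∑ k, c k • A k) := by
    ext p; simp [Φ, vecMul, dotProduct, vec, Matrix.sum_apply, mul_comm]
  have hinj : Function.Injective Φ.vecMul := fun c d hcd =>
    funext (Fintype.linearIndependent_iffₛ.1 hA c d (vec_inj.1 (by rw [← hvec, ← hvec]; exact hcd)))
  rw [hΦ]
  exact .mul_conjTranspose_self Φ hinj

lemma exists_tendsto_zero_ip_add_sum_smul_eq {ι T : Type*} [Fintype ι] [DecidableEq ι]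
    {l : Filter T} {A : ι → T → Mat n} {A' : ι → Mat n} {b : T → ι → ℝ} {b' : ι → ℝ} {B : Mat n}
    (hA : ∀ k, Tendsto (A k) l (𝓝 (A' k))) (hb : Tendsto b l (𝓝 b'))
    (hLI : LinearIndependent ℝ A') (hB : ∀ k, ip (A' k) B = b' k) :
    ∃ c : T → ι → ℝ, Tendsto c l (𝓝 0) ∧
      ∀ᶠ t in l, ∀ k, ip (A k t) (B + ∑ j, c t j • A' j) = b t k := by
  set M : T → Matrix ι ι ℝ := fun t => .of fun k j => ip (A k t) (A' j)
  set G : Matrix ι ι ℝ := .of fun k j => ip (A' k) (A' j)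
  set r : T → ι → ℝ := fun t k => b t k - ip (A k t) B
  have hG : G.det ≠ 0 := (posDef_ip_gram_of_linearIndependent hLI).det_pos.ne'
  have hM : Tendsto M l (𝓝 G) :=
    tendsto_pi_nhds.2 fun k => tendsto_pi_nhds.2 fun j => (hA k).ip tendsto_const_nhds
  have hr : Tendsto r l (𝓝 0) := by
    refine tendsto_pi_nhds.2 fun k => ?_
    have h := (tendsto_pi_nhds.1 hb k).sub ((hA k).ip (tendsto_const_nhds (x := B)))
    simpa [hB k] using h
  have hinv : ContinuousAt Inv.inv G :=
    continuousAt_matrix_inv G (by simpa [Ring.inverse_eq_inv'] using continuousAt_inv₀ hG)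
  have hMinv : Tendsto (fun t => (M t)⁻¹) l (𝓝 G⁻¹) := hinv.tendsto.comp hM
  refine ⟨fun t => (M t)⁻¹ *ᵥ r t, ?_, ?_⟩
  · have h := ((continuous_fst.matrix_mulVec continuous_snd).tendsto (G⁻¹, (0 : ι → ℝ))).comp
      (hMinv.prodMk_nhds hr)
    rw [mulVec_zero] at h
    exact h
  · have hdet : ∀ᶠ t in l, (M t).det ≠ 0 :=
      ((continuous_id.matrix_det.tendsto G).comp hM).eventually_ne hG
    filter_upwards [hdet] with t ht k
    have hsolve : M t *ᵥ ((M t)⁻¹ *ᵥ r t) = r t := by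
      rw [mulVec_mulVec, mul_nonsing_inv _ (isUnit_iff_ne_zero.2 ht), one_mulVec]
    generalize (M t)⁻¹ *ᵥ r t = c at hsolve ⊢
    have hk := congrFun hsolve k
    simp only [mulVec, dotProduct, M, of_apply, r] at hk
    rw [ip_add_sum_smul_right]
    simp_rw [mul_comm (c _)]
    linarith

end FrobeniusPairing

section SDP

variable {n m : ℕ}

def DualFeasible (A : Fin m → Mat n) (b : Fin m → ℝ) (X : Mat n) : Prop :=
  X.PosSemidef ∧ ∀ k, ip (A k) X = b k

def primalSlack (A₀ : Mat n) (A : Fin m → Mat n) (y : Fin m → ℝ) : Mat n :=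
  A₀ - ∑ k, y k • A k

lemma ip_primalSlack (A₀ : Mat n) {A : Fin m → Mat n} {X : Mat n} {b : Fin m → ℝ} (y : Fin m → ℝ)
    (hX : ∀ k, ip (A k) X = b k) : ip (primalSlack A₀ A y) X = ip A₀ X - ∑ k, y k * b k := by
  simp [primalSlack, ip_sub_sum_smul_left, hX]

lemma sum_mul_le_ip_of_dualFeasible {A₀ X : Mat n} {A : Fin m → Mat n} {b y : Fin m → ℝ}
    (hS : (primalSlack A₀ A y).PosSemidef) (hX : DualFeasible A b X) :
    ∑ k, y k * b k ≤ ip A₀ X := by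
  linarith [ip_nonneg hS hX.1, ip_primalSlack A₀ y hX.2]

lemma bddBelow_dualVals {A₀ : Mat n} {A : Fin m → Mat n} {b y : Fin m → ℝ}
    (hS : (primalSlack A₀ A y).PosSemidef) : BddBelow (dualVals A₀ A b) := by
  refine ⟨∑ k, y k * b k, ?_⟩
  rintro _ ⟨X, hX, rfl⟩
  exact sum_mul_le_ip_of_dualFeasible hS hX

lemma mul_trace_le_of_dualFeasible {A₀ X : Mat n} {A : Fin m → Mat n} {b y : Fin m → ℝ} {μ : ℝ}
    (hS : (primalSlack A₀ A y - μ • 1).PosSemidef) (hX : DualFeasible A b X) :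
    μ * X.trace ≤ ip A₀ X - ∑ k, y k * b k :=
  ip_primalSlack A₀ y hX.2 ▸ mul_trace_le_ip hS hX.1

lemma exists_posDef_dualFeasible_ip_lt {A₀ X₀ X : Mat n} {A : Fin m → Mat n} {b : Fin m → ℝ}
    {c : ℝ} (hX₀ : X₀.PosDef) (hX₀b : ∀ k, ip (A k) X₀ = b k) (hX : DualFeasible A b X)
    (hXc : ip A₀ X < c) : ∃ B : Mat n, B.PosDef ∧ (∀ k, ip (A k) B = b k) ∧ ip A₀ B < c := by
  have hcont : Tendsto (fun θ : ℝ => (1 - θ) * ip A₀ X + θ * ip A₀ X₀) (𝓝[>] 0)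
      (𝓝 (ip A₀ X)) := by
    have h : Continuous fun θ : ℝ => (1 - θ) * ip A₀ X + θ * ip A₀ X₀ := by fun_prop
    exact (h.tendsto' 0 _ (by simp)).mono_left nhdsWithin_le_nhds
  obtain ⟨θ, hθc, hθ⟩ :=
    ((hcont.eventually_lt_const hXc).and (Ioo_mem_nhdsGT one_pos)).exists
  refine ⟨(1 - θ) • X + θ • X₀, PosDef.posSemidef_add (hX.1.smul (sub_nonneg.2 hθ.2.le))
    (hX₀.smul hθ.1), fun k => ?_, by rwa [ip_one_sub_smul_add_smul_right]⟩
  rw [ip_one_sub_smul_add_smul_right, hX.2, hX₀b]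
  ring

lemma isClosed_setOf_dualFeasible_ip_le (c : ℝ) :
    IsClosed {p : (Mat n × (Fin m → Mat n) × (Fin m → ℝ)) × Mat n |
      DualFeasible p.1.2.1 p.1.2.2 p.2 ∧ ip p.1.1 p.2 ≤ c} := by
  simp only [DualFeasible, ofPred_and, ofPred_forall]
  refine ((isClosed_setOf_posSemidef.preimage continuous_snd).inter
    (isClosed_iInter fun k => isClosed_eq ?_ ?_)).inter (isClosed_le ?_ continuous_const) <;>
    fun_prop

end SDP

section Perturbation

variable {n m : ℕ} {T : Type*} {l : Filter T} {A₀ : T → Mat n} {A : Fin m → T → Mat n}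
  {b : T → Fin m → ℝ} {A₀' : Mat n} {A' : Fin m → Mat n} {b' : Fin m → ℝ}

lemma tendsto_primalSlack (hA₀ : Tendsto A₀ l (𝓝 A₀')) (hA : ∀ k, Tendsto (A k) l (𝓝 (A' k)))
    (y : Fin m → ℝ) :
    Tendsto (fun t => primalSlack (A₀ t) (fun k => A k t) y) l (𝓝 (primalSlack A₀' A' y)) :=
  hA₀.sub (tendsto_finsetSum _ fun k _ => (hA k).const_smul (y k))

lemma exists_tendsto_dualFeasible (hA : ∀ k, Tendsto (A k) l (𝓝 (A' k)))
    (hb : Tendsto b l (𝓝 b')) (hA'h : ∀ k, (A' k).IsHermitian) (hLI : LinearIndependent ℝ A')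
    {B : Mat n} (hB : B.PosDef) (hBb : ∀ k, ip (A' k) B = b' k) :
    ∃ Y : T → Mat n, Tendsto Y l (𝓝 B) ∧ ∀ᶠ t in l, DualFeasible (fun k => A k t) (b t) (Y t) := by
  obtain ⟨c, hc, hcb⟩ := exists_tendsto_zero_ip_add_sum_smul_eq hA hb hLI hBb
  set Y : T → Mat n := fun t => B + ∑ j, c t j • A' j
  have hY : Tendsto Y l (𝓝 B) := by
    have h : Tendsto Y l (𝓝 (B + ∑ j, (0 : Fin m → ℝ) j • A' j)) :=
      tendsto_const_nhds.add (tendsto_finsetSum _ fun j _ => (tendsto_pi_nhds.1 hc j).smul_const _)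
    simpa using h
  have hYh (t : T) : (Y t).IsHermitian := hB.isHermitian.add <|
    isSelfAdjoint_sum (x := fun j => c t j • A' j) _ fun j _ => (hA'h j).smul (.all _)
  refine ⟨Y, hY, ?_⟩
  filter_upwards [hB.eventually_posSemidef hY hYh, hcb] with t hpsd hfeas
  exact ⟨hpsd, hfeas⟩

lemma eventually_sInf_dualVals_lt (hA₀ : Tendsto A₀ l (𝓝 A₀'))
    (hA : ∀ k, Tendsto (A k) l (𝓝 (A' k))) (hb : Tendsto b l (𝓝 b'))
    (hA'h : ∀ k, (A' k).IsHermitian) (hLI : LinearIndependent ℝ A') {X₀ : Mat n}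
    (hX₀ : X₀.PosDef) (hX₀b : ∀ k, ip (A' k) X₀ = b' k)
    (hbdd : ∀ᶠ t in l, BddBelow (dualVals (A₀ t) (fun k => A k t) (b t)))
    {c : ℝ} (hc : sInf (dualVals A₀' A' b') < c) :
    ∀ᶠ t in l, sInf (dualVals (A₀ t) (fun k => A k t) (b t)) < c := by
  have hne : (dualVals A₀' A' b').Nonempty := ⟨_, X₀, ⟨hX₀.posSemidef, hX₀b⟩, rfl⟩
  obtain ⟨_, ⟨X, hX, rfl⟩, hXc⟩ := exists_lt_of_csInf_lt hne hc
  obtain ⟨B, hB, hBb, hBc⟩ := exists_posDef_dualFeasible_ip_lt hX₀ hX₀b hX hXc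
  obtain ⟨Y, hY, hYfeas⟩ := exists_tendsto_dualFeasible hA hb hA'h hLI hB hBb
  filter_upwards [hbdd, hYfeas, (hA₀.ip hY).eventually_lt_const hBc] with t hbddt hYt hYc
  exact (csInf_le hbddt ⟨Y t, hYt, rfl⟩).trans_lt hYc

lemma eventually_lt_sInf_dualVals (hA₀ : Tendsto A₀ l (𝓝 A₀'))
    (hA : ∀ k, Tendsto (A k) l (𝓝 (A' k))) (hb : Tendsto b l (𝓝 b')) {y : Fin m → ℝ} {μ : ℝ}
    (hμ : 0 < μ) (hS : ∀ᶠ t in l, (primalSlack (A₀ t) (fun k => A k t) y - μ • 1).PosSemidef)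
    (hne : ∀ᶠ t in l, (dualVals (A₀ t) (fun k => A k t) (b t)).Nonempty)
    (hbdd : BddBelow (dualVals A₀' A' b')) {c : ℝ} (hc : c < sInf (dualVals A₀' A' b')) :
    ∀ᶠ t in l, c < sInf (dualVals (A₀ t) (fun k => A k t) (b t)) := by
  obtain ⟨c', hcc', hc'⟩ := exists_between hc
  set R := (c' - ∑ k, y k * b' k + 1) / μ
  have hyb : ∀ᶠ t in l, ∑ k, y k * b' k - 1 < ∑ k, y k * b t k := by
    have h : Tendsto (fun t => ∑ k, y k * b t k) l (𝓝 (∑ k, y k * b' k)) :=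
      tendsto_finsetSum _ fun k _ => (tendsto_pi_nhds.1 hb k).const_mul (y k)
    exact h.eventually_const_lt (sub_one_lt _)
  by_contra hfreq
  rw [not_eventually] at hfreq
  have hfreq' : ∃ᶠ t in l, ∃ X ∈ {X : Mat n | ∀ i j, |X i j| ≤ R},
      ((A₀ t, fun k => A k t, b t), X) ∈ {p : (Mat n × (Fin m → Mat n) × (Fin m → ℝ)) × Mat n |
        DualFeasible p.1.2.1 p.1.2.2 p.2 ∧ ip p.1.1 p.2 ≤ c'} := by
    refine (hfreq.and_eventually (hS.and (hne.and hyb))).mono fun t ⟨hvt, hSt, hnet, hybt⟩ => ?_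
    obtain ⟨_, ⟨X, hX, rfl⟩, hXc⟩ := exists_lt_of_csInf_lt hnet ((not_lt.1 hvt).trans_lt hcc')
    have htr : X.trace ≤ R := by
      rw [le_div_iff₀ hμ, mul_comm]
      linarith [mul_trace_le_of_dualFeasible hSt hX]
    exact ⟨X, fun i j => (hX.1.abs_apply_le_trace i j).trans htr, hX, hXc.le⟩
  have hdata : Tendsto (fun t => (A₀ t, (fun k => A k t), b t)) l (𝓝 (A₀', A', b')) :=
    hA₀.prodMk_nhds ((tendsto_pi_nhds.2 hA).prodMk_nhds hb)
  obtain ⟨X, -, hX, hXc'⟩ := (isCompact_setOf_abs_apply_le R).exists_prodMk_mem_of_frequently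
    (isClosed_setOf_dualFeasible_ip_le c') hdata hfreq'
  exact (csInf_le hbdd ⟨X, hX, rfl⟩).not_gt (hXc'.trans_lt hc')

end Perturbation

/-- If both the primal and dual SDP are strictly feasible and `A₁, …, A_m` are
linearly independent, then for perturbed data continuous at `t = 0`, the
perturbed primal and dual SDPs are feasible for all sufficiently small `t` and the
optimal value of the perturbed dual SDP varies continuously at `t = 0`. -/
theorem dual_optimal_value_continuous_of_linearIndependent (n m : ℕ) (δ : ℝ) (hδ : 0 < δ)
    (A₀ : ℝ → Mat n) (A : Fin m → ℝ → Mat n) (b : ℝ → Fin m → ℝ)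
    (hA₀symm : ∀ t, (A₀ t).IsSymm) (hAsymm : ∀ k t, (A k t).IsSymm)
    (hA₀cont : Tendsto A₀ (nhdsWithin 0 (Icc 0 δ)) (nhds (A₀ 0)))
    (hAcont : ∀ k, Tendsto (A k) (nhdsWithin 0 (Icc 0 δ)) (nhds (A k 0)))
    (hbcont : Tendsto b (nhdsWithin 0 (Icc 0 δ)) (nhds (b 0)))
    (hPstrict : ∃ y : Fin m → ℝ, (A₀ 0 - ∑ k, y k • A k 0).PosDef)
    (hDstrict : ∃ X : Mat n, X.PosDef ∧ ∀ k, ip (A k 0) X = b 0 k)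
    (hLI : LinearIndependent ℝ (fun k => A k 0)) :
    ∃ δ' : ℝ, 0 < δ' ∧ δ' ≤ δ ∧
      (∀ t ∈ Icc (0:ℝ) δ',
        (∃ y : Fin m → ℝ, (A₀ t - ∑ k, y k • A k t).PosSemidef) ∧
        (∃ X : Mat n, X.PosSemidef ∧ ∀ k, ip (A k t) X = b t k)) ∧
      Tendsto (fun t => sInf (dualVals (A₀ t) (fun k => A k t) (b t)))
        (nhdsWithin 0 (Icc 0 δ'))
        (nhds (sInf (dualVals (A₀ 0) (fun k => A k 0) (b 0)))) := by
  obtain ⟨y, hy⟩ := hPstrict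
  obtain ⟨X₀, hX₀, hX₀b⟩ := hDstrict
  have hAh (k : Fin m) (t : ℝ) : (A k t).IsHermitian := (hAsymm k t).isHermitian_of_trivialStar
  have hSh (t : ℝ) : (primalSlack (A₀ t) (fun k => A k t) y).IsHermitian :=
    (hA₀symm t).isHermitian_of_trivialStar.sub <|
      isSelfAdjoint_sum (x := fun k => y k • A k t) _ fun k _ => (hAh k t).smul (.all _)
  obtain ⟨μ, hμ, hSμ⟩ :=
    PosDef.eventually_posSemidef_sub_smul_one hy (tendsto_primalSlack hA₀cont hAcont y) hSh
  have hS := hSμ.mono fun t ht => ht.of_sub_smul_one hμ.le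
  obtain ⟨Y, -, hY⟩ :=
    exists_tendsto_dualFeasible hAcont hbcont (fun k => hAh k 0) hLI hX₀ hX₀b
  have hvalue : Tendsto (fun t => sInf (dualVals (A₀ t) (fun k => A k t) (b t)))
      (𝓝[Icc 0 δ] 0) (𝓝 (sInf (dualVals (A₀ 0) (fun k => A k 0) (b 0)))) :=
    tendsto_order.2
      ⟨fun c hc => eventually_lt_sInf_dualVals hA₀cont hAcont hbcont hμ hSμ
          (hY.mono fun t hYt => ⟨_, Y t, hYt, rfl⟩) (bddBelow_dualVals hy.posSemidef) hc,
        fun c hc => eventually_sInf_dualVals_lt hA₀cont hAcont hbcont (fun k => hAh k 0) hLI hX₀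
          hX₀b (hS.mono fun t => bddBelow_dualVals) hc⟩
  obtain ⟨δ', hδ', hδ'δ, hfeas⟩ :=
    exists_forall_Icc_of_eventually_nhdsWithin_Icc hδ (hS.and hY)
  exact ⟨δ', hδ', hδ'δ, fun t ht => ⟨⟨y, (hfeas t ht).1⟩, ⟨Y t, (hfeas t ht).2⟩⟩,
    hvalue.mono_left (nhdsWithin_mono _ (Icc_subset_Icc_right hδ'δ))⟩
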